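/- For every t, a, s, n ∈ ℕ with n ≥ 1 and s ≥ n+3, one has F_t(a, s, 0, n) + F_t(a, s, 0, n−1) = F_t(a+t+1, s, s−n−3, n). -/

import Mathlib

open Finset

noncomputable section

/-- Binomial coefficient `C(a,k)` with integer arguments; zero if `k < 0` or `a < k`. -/
def Cb (a k : ℤ) : ℤ := if 0 ≤ k ∧ k ≤ a then (Nat.choose a.toNat k.toNat : ℤ) else 0

/-- The recursively defined function `F_t(a, s, ε, n)`. -/
def Fb : ℕ → ℤ → ℕ → ℕ → ℤ → ℤ
  | 0, a, _, _, n => Cb a n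
  | (t+1), a, s, e, n =>
      if n < 0 then 0 else
      Cb a n
        + ∑ j ∈ Finset.range (t+1), Cb ((s : ℤ) - n - 4 + (j+1)) (j+1) * Cb (a + (j+1)) n
        - ∑ j ∈ Finset.range (t+1), Cb (e : ℤ) (j+1) * Fb (t - j) a s e (n - (j+1))
  termination_by t _ _ _ _ => t
  decreasing_by omega

/-!
Write `E = s - n - 3`. Then the coefficient `C(s-n-4+i, i)` in the recursion is the multiset
coefficient `multichoose E i`, so for `ε = 0` both terms on the left are explicit sums, and Pascal's
rule telescopes their sum to `multichoose (E+1) t * C(a+t+1, n)`.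

On the right, the recursion says that along each diagonal `k ↦ (k, n - t + k)` the convolution of
`Fb` with `C(ε, ·)` is the `ε`-free part `Gb`; inverting `(1+x)^ε` gives
`F_t(n) = ∑ (-1)^j multichoose ε j * G_{t-j}(n-j)`. For `ε = E` this double sum collapses, by
`multichoose E j * multichoose (E+j) i = multichoose E (i+j) * C(i+j, j)` and the finite-difference
identity `∑ (-1)^j C(m,j) C(A+m-j, n-j) = C(A, n)`, to the same value.
-/

theorem Ring.choose_neg_natCast (ε j : ℕ) :
    Ring.choose (-(ε : ℤ)) j = (-1) ^ j * ε.multichoose j := by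
  rw [Ring.choose_neg, Nat.multichoose_eq, Units.smul_def, Int.coe_negOnePow_natCast, smul_eq_mul]
  rcases Nat.eq_zero_or_pos (ε + j) with h | h
  · obtain ⟨rfl, rfl⟩ : ε = 0 ∧ j = 0 := by omega
    simp
  · rw [show (ε : ℤ) + j - 1 = ((ε + j - 1 : ℕ) : ℤ) by omega, Ring.choose_natCast]

theorem Nat.multichoose_mul_multichoose_add (E j i : ℕ) :
    E.multichoose j * (E + j).multichoose i = E.multichoose (j + i) * (j + i).choose j := by
  rcases E with _ | e
  · rcases j with _ | j
    · simp
    · rw [show j + 1 + i = (j + i) + 1 by omega]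
      simp only [Nat.multichoose_zero_succ, zero_mul]
  · simp only [Nat.multichoose_eq, show e + 1 + j + i - 1 = e + j + i by omega,
      show e + 1 + j - 1 = e + j by omega, show e + 1 + (j + i) - 1 = e + j + i by omega]
    rw [Nat.choose_symm_add, Nat.choose_mul (Nat.le_add_left i j), Nat.add_sub_cancel,
      Nat.add_sub_cancel, mul_comm]

theorem Nat.multichoose_succ_eq_sum (E t : ℕ) :
    (E + 1).multichoose t = ∑ i ∈ range (t + 1), E.multichoose i := by
  induction t with
  | zero => simp
  | succ t ih => rw [Nat.multichoose_succ_succ, sum_range_succ, ih, add_comm]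

theorem Finset.Nat.sum_antidiagonal_sum_range_succ {M : Type*} [AddCommMonoid M]
    (f : ℕ → ℕ → M) (t : ℕ) :
    ∑ p ∈ antidiagonal t, ∑ i ∈ range (p.2 + 1), f p.1 i =
      ∑ m ∈ range (t + 1), ∑ p ∈ antidiagonal m, f p.1 p.2 := by
  induction t with
  | zero => simp
  | succ t ih =>
    rw [Nat.sum_antidiagonal_succ', sum_range_succ _ (t + 1), ← ih, Nat.sum_antidiagonal_succ']
    simp only [sum_range_succ, sum_range_zero, zero_add, sum_add_distrib]
    abel

theorem PowerSeries.mk_neg_multichoose_mul_mk_choose (R : Type*) [CommRing R] (ε : ℕ) :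
    mk (fun j ↦ (-1 : R) ^ j * ε.multichoose j) * mk (fun i ↦ (ε.choose i : R)) = 1 := by
  have key : mk (fun j ↦ (-1 : ℤ) ^ j * ε.multichoose j) * mk (fun i ↦ (ε.choose i : ℤ)) = 1 := by
    ext m
    rw [coeff_mul, coeff_one, ← Ring.choose_zero_ite ℤ m, ← neg_add_cancel (ε : ℤ),
      Ring.add_choose_eq m (Commute.all _ _)]
    simp [Ring.choose_neg_natCast, Ring.choose_natCast]
  ext m
  simpa [coeff_mul, coeff_one, apply_ite] using congrArg (Int.cast (R := R) ∘ coeff m) key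

theorem eq_sum_neg_multichoose_mul_of_sum_choose_mul_eq {R : Type*} [CommRing R] (ε : ℕ)
    {φ γ : ℕ → R}
    (h : ∀ k, ∑ p ∈ antidiagonal k, (ε.choose p.1 : R) * φ p.2 = γ k) (t : ℕ) :
    φ t = ∑ p ∈ antidiagonal t, (-1) ^ p.1 * ε.multichoose p.1 * γ p.2 := by
  have hγ : PowerSeries.mk (fun i ↦ (ε.choose i : R)) * .mk φ = .mk γ := by
    ext k; simp [PowerSeries.coeff_mul, h]
  have hφ : PowerSeries.mk φ = .mk (fun j ↦ (-1 : R) ^ j * ε.multichoose j) * .mk γ := by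
    rw [← hγ, ← mul_assoc, PowerSeries.mk_neg_multichoose_mul_mk_choose, one_mul]
  simpa [PowerSeries.coeff_mul] using congrArg (PowerSeries.coeff t) hφ

theorem Cb_of_neg {a n : ℤ} (h : n < 0) : Cb a n = 0 := by
  rw [Cb, if_neg (by omega)]

theorem Cb_natCast (a k : ℕ) : Cb a k = a.choose k := by
  rw [Cb]
  split_ifs with h
  · simp
  · rw [Nat.choose_eq_zero_of_lt (by omega), Nat.cast_zero]

theorem Cb_natCast_zero (a : ℕ) : Cb a 0 = 1 := by
  simpa using Cb_natCast a 0

theorem Cb_add_one {a : ℤ} (ha : 0 ≤ a) (n : ℤ) : Cb (a + 1) n = Cb a n + Cb a (n - 1) := by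
  lift a to ℕ using ha
  rcases lt_or_ge n 0 with hn | hn
  · simp [Cb_of_neg, hn, show n - 1 < 0 by omega]
  lift n to ℕ using hn
  rcases n with _ | n
  · rw [← Nat.cast_succ, Cb_natCast, Cb_natCast, Cb_of_neg (by omega)]
    simp
  · rw [← Nat.cast_succ, Cb_natCast, Cb_natCast, Nat.cast_succ, add_sub_cancel_right, Cb_natCast,
      Nat.choose_succ_succ', Nat.cast_add, add_comm]

theorem sum_antidiagonal_choose_mul_Cb (m : ℕ) {a : ℤ} (ha : 0 ≤ a) (n : ℤ) :
    ∑ p ∈ antidiagonal m, (m.choose p.1 : ℤ) * ((-1) ^ p.1 * Cb (a + p.2) (n - p.1)) = Cb a n := by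
  induction m generalizing a n with
  | zero => simp
  | succ m ih =>
    have hshift : ∑ p ∈ antidiagonal m,
        (m.choose p.1 : ℤ) * ((-1) ^ p.1 * Cb (a + (p.2 + 1 : ℕ)) (n - p.1)) = Cb (a + 1) n := by
      rw [← ih (by positivity) n]
      refine sum_congr rfl fun p _ ↦ ?_
      push_cast
      ring_nf
    have hdrop : ∑ p ∈ antidiagonal m,
        (m.choose p.2 : ℤ) * ((-1) ^ (p.1 + 1) * Cb (a + p.2) (n - (p.1 + 1 : ℕ))) =
          -Cb a (n - 1) := by
      rw [← ih ha (n - 1), ← sum_neg_distrib]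
      refine sum_congr rfl fun p hp ↦ ?_
      rw [HasAntidiagonal.mem_antidiagonal] at hp
      rw [← Nat.choose_symm_of_eq_add hp.symm]
      push_cast
      ring_nf
    rw [sum_antidiagonal_choose_succ_mul (fun i j ↦ (-1) ^ i * Cb (a + j) (n - i)), hshift, hdrop,
      Cb_add_one ha]
    ring

def Gb (t : ℕ) (a : ℤ) (s : ℕ) (n : ℤ) : ℤ :=
  Cb a n + ∑ j ∈ range t, Cb ((s : ℤ) - n - 4 + (j + 1)) (j + 1) * Cb (a + (j + 1)) n

theorem Gb_of_neg (t : ℕ) (a : ℤ) (s : ℕ) {n : ℤ} (hn : n < 0) : Gb t a s n = 0 := by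
  simp [Gb, Cb_of_neg hn]

theorem Gb_eq_sum_multichoose (t : ℕ) (a : ℤ) {s E : ℕ} {n : ℤ} (hE : (s : ℤ) - n - 3 = E) :
    Gb t a s n = ∑ i ∈ range (t + 1), E.multichoose i * Cb (a + i) n := by
  rw [Gb, sum_range_succ', add_comm]
  congr 1
  · refine sum_congr rfl fun i _ ↦ ?_
    rw [show (s : ℤ) - n - 4 + (i + 1) = ((E + i : ℕ) : ℤ) by omega, ← Nat.cast_succ,
      Cb_natCast, Nat.multichoose_eq, Nat.add_sub_assoc (by omega), Nat.add_sub_cancel]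
  · simp

theorem Fb_of_neg (t : ℕ) (a : ℤ) (s e : ℕ) {n : ℤ} (hn : n < 0) : Fb t a s e n = 0 := by
  cases t with
  | zero => rw [Fb, Cb_of_neg hn]
  | succ t => rw [Fb, if_pos hn]

theorem Fb_zero (a : ℤ) (s e : ℕ) (n : ℤ) : Fb 0 a s e n = Gb 0 a s n := by
  simp [Fb, Gb]

theorem Fb_succ (t : ℕ) (a : ℤ) (s e : ℕ) {n : ℤ} (hn : 0 ≤ n) :
    Fb (t + 1) a s e n =
      Gb (t + 1) a s n - ∑ j ∈ range (t + 1), Cb e (j + 1) * Fb (t - j) a s e (n - (j + 1)) := by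
  rw [Fb, if_neg (not_lt.mpr hn), Gb]

theorem sum_antidiagonal_Cb_mul_Fb (t : ℕ) (a : ℤ) (s e : ℕ) (n : ℤ) :
    ∑ p ∈ antidiagonal t, Cb e p.1 * Fb p.2 a s e (n - p.1) = Gb t a s n := by
  rcases lt_or_ge n 0 with hn | hn
  · rw [Gb_of_neg t a s hn]
    exact sum_eq_zero fun p _ ↦ by rw [Fb_of_neg _ _ _ _ (by omega), mul_zero]
  cases t with
  | zero => simp [Fb_zero, Cb_natCast_zero]
  | succ t =>
    rw [Nat.sum_antidiagonal_succ]
    simp only [Nat.cast_zero, sub_zero, Cb_natCast_zero, one_mul]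
    rw [Fb_succ t a s e hn, Nat.sum_antidiagonal_eq_sum_range_succ
      (fun i j ↦ Cb e (i + 1 : ℕ) * Fb j a s e (n - (i + 1 : ℕ)))]
    simp

theorem Fb_eq_Gb_of_eps_zero (t : ℕ) (a : ℤ) (s : ℕ) (n : ℤ) : Fb t a s 0 n = Gb t a s n := by
  rw [← sum_antidiagonal_Cb_mul_Fb t a s 0 n, sum_eq_single (0, t)]
  · rw [Cb_natCast]
    simp
  · rintro ⟨i, j⟩ hp hij
    rw [HasAntidiagonal.mem_antidiagonal] at hp
    have hi : 0 < i := Nat.pos_of_ne_zero fun h ↦ hij (by simp_all)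
    rw [Cb_natCast, Nat.choose_eq_zero_of_lt hi, Nat.cast_zero, zero_mul]
  · simp

theorem Fb_eq_sum_antidiagonal_Gb (t : ℕ) (a : ℤ) (s ε : ℕ) (n : ℤ) :
    Fb t a s ε n = ∑ p ∈ antidiagonal t, (-1) ^ p.1 * ε.multichoose p.1 * Gb p.2 a s (n - p.1) := by
  have key := eq_sum_neg_multichoose_mul_of_sum_choose_mul_eq ε
    (φ := fun k ↦ Fb k a s ε (n - t + k)) (γ := fun k ↦ Gb k a s (n - t + k)) (fun k ↦ by
      rw [← sum_antidiagonal_Cb_mul_Fb k a s ε]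
      refine sum_congr rfl fun p hp ↦ ?_
      rw [HasAntidiagonal.mem_antidiagonal] at hp
      rw [Cb_natCast, show n - t + k - p.1 = n - t + p.2 by omega]) t
  simp only [sub_add_cancel] at key
  rw [key]
  refine sum_congr rfl fun p hp ↦ ?_
  rw [HasAntidiagonal.mem_antidiagonal] at hp
  rw [show n - t + p.2 = n - p.1 by omega]

theorem sum_antidiagonal_multichoose_mul_Cb (E m : ℕ) {a : ℤ} (ha : 0 ≤ a) (n : ℤ) :
    ∑ p ∈ antidiagonal m,
        (-1) ^ p.1 * E.multichoose p.1 * ((E + p.1).multichoose p.2 * Cb (a + p.2) (n - p.1)) =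
      E.multichoose m * Cb a n := by
  rw [← sum_antidiagonal_choose_mul_Cb m ha n, mul_sum]
  refine sum_congr rfl fun p hp ↦ ?_
  rw [HasAntidiagonal.mem_antidiagonal] at hp
  have := congrArg (Nat.cast (R := ℤ)) (Nat.multichoose_mul_multichoose_add E p.1 p.2)
  rw [hp] at this
  push_cast at this
  linear_combination (-1) ^ p.1 * Cb (a + p.2) (n - p.1) * this

theorem Fb_eq_multichoose_mul_Cb (t : ℕ) {a : ℤ} (ha : 0 ≤ a) {s E : ℕ} {n : ℤ}
    (hE : (s : ℤ) - n - 3 = E) :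
    Fb t a s E n = (E + 1).multichoose t * Cb a n := by
  have hG : ∀ p ∈ antidiagonal t, (-1) ^ p.1 * E.multichoose p.1 * Gb p.2 a s (n - p.1) =
      ∑ i ∈ range (p.2 + 1),
        (-1) ^ p.1 * E.multichoose p.1 * ((E + p.1).multichoose i * Cb (a + i) (n - p.1)) := by
    intro p _
    rw [Gb_eq_sum_multichoose p.2 a (E := E + p.1) (by push_cast; omega), mul_sum]
  rw [Fb_eq_sum_antidiagonal_Gb, sum_congr rfl hG, Nat.sum_antidiagonal_sum_range_succ
    (fun j i ↦ (-1) ^ j * E.multichoose j * ((E + j).multichoose i * Cb (a + i) (n - j)))]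
  simp only [sum_antidiagonal_multichoose_mul_Cb E _ ha, ← sum_mul, Nat.multichoose_succ_eq_sum,
    Nat.cast_sum]

theorem sum_multichoose_mul_Cb_add (E t : ℕ) {a : ℤ} (ha : 0 ≤ a) (n : ℤ) :
    ∑ i ∈ range (t + 1), E.multichoose i * Cb (a + i) n +
        ∑ i ∈ range (t + 1), (E + 1).multichoose i * Cb (a + i) (n - 1) =
      (E + 1).multichoose t * Cb (a + (t + 1 : ℕ)) n := by
  induction t with
  | zero => simp [Cb_add_one ha]
  | succ t ih =>
    have hP : Cb (a + (t + 1 + 1 : ℕ)) n =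
        Cb (a + (t + 1 : ℕ)) n + Cb (a + (t + 1 : ℕ)) (n - 1) := by
      rw [← Cb_add_one (by positivity), Nat.cast_succ (t + 1), add_assoc]
    rw [sum_range_succ, sum_range_succ _ (t + 1), Nat.multichoose_succ_succ,
      Nat.cast_add (E.multichoose (t + 1))]
    linear_combination ih - (E.multichoose (t + 1) + (E + 1).multichoose t : ℤ) * hP

theorem Fb_add_Fb_sub_one_of_eps_zero (t : ℕ) {a : ℤ} (ha : 0 ≤ a) {s E : ℕ} {n : ℤ}
    (hE : (s : ℤ) - n - 3 = E) :
    Fb t a s 0 n + Fb t a s 0 (n - 1) = (E + 1).multichoose t * Cb (a + (t + 1 : ℕ)) n := by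
  rw [Fb_eq_Gb_of_eps_zero, Fb_eq_Gb_of_eps_zero, Gb_eq_sum_multichoose t a hE,
    Gb_eq_sum_multichoose t a (E := E + 1) (by push_cast; omega),
    sum_multichoose_mul_Cb_add E t ha]

theorem stmt_16_general (t a s n : ℕ) (hs : n + 3 ≤ s) :
    Fb t (a : ℤ) s 0 (n : ℤ) + Fb t (a : ℤ) s 0 ((n : ℤ) - 1) =
      Fb t ((a : ℤ) + t + 1) s (s - n - 3) (n : ℤ) := by
  have hE : (s : ℤ) - n - 3 = (s - n - 3 : ℕ) := by omega
  rw [Fb_add_Fb_sub_one_of_eps_zero t (Nat.cast_nonneg a) hE,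
    Fb_eq_multichoose_mul_Cb t (by positivity) hE, Nat.cast_succ, add_assoc]

/-- **Property 3.** `F_t(a,s,0,n) + F_t(a,s,0,n−1) = F_t(a+t+1,s,s−n−3,n)`
for `n ≥ 1` and `s ≥ n+3`. -/
theorem stmt_16 (t a s n : ℕ) (hn : 1 ≤ n) (hs : n + 3 ≤ s) :
    Fb t (a : ℤ) s 0 (n : ℤ) + Fb t (a : ℤ) s 0 ((n : ℤ) - 1) =
      Fb t ((a : ℤ) + t + 1) s (s - n - 3) (n : ℤ) :=
  stmt_16_general t a s n hs

end
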